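/- Under Assumption 1 with 0 ≤ ε < 1, any optimal solution X_opt of problem P(A,r) satisfies, for every column index i, ||X_opt(:,i)||_1 ≤ 1 + 4ε/(1−ε). -/

import Mathlib

noncomputable section
open Matrix
open scoped Classical

/-- Entrywise L1 norm of a vector. -/
def l1 {α : Type*} [Fintype α] (v : α → ℝ) : ℝ := ∑ i, |v i|

/-- Induced L1 norm of a matrix (maximum column sum of absolute values). -/
def ml1 {α β : Type*} [Fintype α] [Fintype β] (M : Matrix α β ℝ) : ℝ :=
  sSup (Set.range fun j => ∑ i, |M i j|)

/-- Feasible set of problem P(A,r). -/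
def Feas {ι : Type*} [Fintype ι] [DecidableEq ι] (X : Matrix ι ι ℝ) (r : ℕ) : Prop :=
  Matrix.trace X = (r : ℝ) ∧ (∀ i, X i i ≤ 1) ∧ (∀ i j, 0 ≤ X i j) ∧
    (∀ i j, X i j ≤ X i i)

/-- κ(W) = min over j of min over nonnegative z (supported off j) of
    ‖w_j − W(:,R∖{j}) z‖₁. -/
def kappa {d r : ℕ} (W : Matrix (Fin d) (Fin r) ℝ) : ℝ :=
  sInf {c | ∃ (j : Fin r) (z : Fin r → ℝ), (∀ k, 0 ≤ z k) ∧ z j = 0 ∧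
    c = l1 (fun i => W i j - ∑ k, W i k * z k)}

/-- ω(W) = min over distinct pairs of ‖w_{j₁} − w_{j₂}‖₁. -/
def omegaW {d r : ℕ} (W : Matrix (Fin d) (Fin r) ℝ) : ℝ :=
  sInf {c | ∃ j₁ j₂ : Fin r, j₁ ≠ j₂ ∧ c = l1 (fun i => W i j₁ - W i j₂)}

/-- β = maximum entry of H̄. -/
def betaH {r m : ℕ} (Hb : Matrix (Fin r) (Fin m) ℝ) : ℝ :=
  sSup (Set.range fun p : Fin r × Fin m => Hb p.1 p.2)

/-!
Let `θ` be the optimal value. Stacking `H` on top of a zero block and undoing the permutation `σ`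
gives a feasible `X` with `H * X = H`, hence `A - A * X = N - N * X`; its columns are stochastic,
so `θ ≤ 2ε`. Summing the `i`-th column of `A - A * Xopt` with the column sums `cᵤ = 1ᵀ A(:,u)`,
all within `ε` of `1`, gives `(1 - ε) ‖Xopt(:,i)‖₁ ≤ ∑ᵤ cᵤ Xopt(u,i) ≤ cᵢ + θ ≤ 1 + 3ε`.
-/

lemma l1_eq_sum_of_nonneg {α : Type*} [Fintype α] {v : α → ℝ} (hv : ∀ i, 0 ≤ v i) :
    l1 v = ∑ i, v i :=
  Finset.sum_congr rfl fun i _ => abs_of_nonneg (hv i)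

section InducedL1Norm

variable {α β γ : Type*} [Fintype α] [Fintype β] [Fintype γ]

lemma sum_abs_le_ml1 (M : Matrix α β ℝ) (j : β) : ∑ i, |M i j| ≤ ml1 M :=
  le_csSup (Set.finite_range _).bddAbove ⟨j, rfl⟩

lemma abs_sum_le_ml1 (M : Matrix α β ℝ) (j : β) : |∑ i, M i j| ≤ ml1 M :=
  (Finset.abs_sum_le_sum_abs _ _).trans (sum_abs_le_ml1 M j)

lemma ml1_nonneg (M : Matrix α β ℝ) : 0 ≤ ml1 M :=
  Real.sSup_nonneg <| by
    rintro x ⟨j, rfl⟩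
    exact Finset.sum_nonneg fun i _ => abs_nonneg (M i j)

lemma ml1_le {M : Matrix α β ℝ} {c : ℝ} (hc : 0 ≤ c) (h : ∀ j, ∑ i, |M i j| ≤ c) :
    ml1 M ≤ c :=
  Real.sSup_le (by rintro x ⟨j, rfl⟩; exact h j) hc

lemma ml1_sub_le (M M' : Matrix α β ℝ) : ml1 (M - M') ≤ ml1 M + ml1 M' :=
  ml1_le (add_nonneg (ml1_nonneg M) (ml1_nonneg M')) fun j =>
    calc ∑ i, |(M - M') i j| ≤ ∑ i, (|M i j| + |M' i j|) :=
          Finset.sum_le_sum fun i _ => abs_sub _ _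
      _ ≤ ml1 M + ml1 M' := by
          rw [Finset.sum_add_distrib]
          exact add_le_add (sum_abs_le_ml1 M j) (sum_abs_le_ml1 M' j)

lemma ml1_mul_le (M : Matrix α β ℝ) (X : Matrix β γ ℝ) : ml1 (M * X) ≤ ml1 M * ml1 X :=
  ml1_le (mul_nonneg (ml1_nonneg M) (ml1_nonneg X)) fun v =>
    calc ∑ i, |(M * X) i v| ≤ ∑ i, ∑ u, |M i u| * |X u v| := by
          refine Finset.sum_le_sum fun i _ => ?_
          simpa only [mul_apply, abs_mul] using
            Finset.abs_sum_le_sum_abs (fun u => M i u * X u v) Finset.univ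
      _ = ∑ u, (∑ i, |M i u|) * |X u v| := by
          rw [Finset.sum_comm]
          simp only [Finset.sum_mul]
      _ ≤ ∑ u, ml1 M * |X u v| :=
          Finset.sum_le_sum fun u _ =>
            mul_le_mul_of_nonneg_right (sum_abs_le_ml1 M u) (abs_nonneg _)
      _ ≤ ml1 M * ml1 X := by
          rw [← Finset.mul_sum]
          exact mul_le_mul_of_nonneg_left (sum_abs_le_ml1 X v) (ml1_nonneg M)

lemma ml1_le_one_of_sum_eq_one {X : Matrix β γ ℝ} (hX : ∀ u v, 0 ≤ X u v)
    (hsum : ∀ v, ∑ u, X u v = 1) : ml1 X ≤ 1 :=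
  ml1_le zero_le_one fun v => by rw [← l1, l1_eq_sum_of_nonneg (fun u => hX u v), hsum]

lemma ml1_sub_mul_le {M : Matrix α β ℝ} {X : Matrix β β ℝ} (hX : ml1 X ≤ 1) :
    ml1 (M - M * X) ≤ 2 * ml1 M :=
  calc ml1 (M - M * X) ≤ ml1 M + ml1 M * ml1 X :=
        (ml1_sub_le M _).trans (add_le_add_right (ml1_mul_le M X) _)
    _ ≤ 2 * ml1 M := by linarith [mul_le_of_le_one_right (ml1_nonneg M) hX]

lemma sum_sub_mul_apply (M : Matrix α β ℝ) (X : Matrix β β ℝ) (i : β) :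
    ∑ j, (M - M * X) j i = ∑ j, M j i - ∑ u, (∑ j, M j u) * X u i := by
  simp only [Matrix.sub_apply, Finset.sum_sub_distrib, mul_apply, Finset.sum_mul]
  rw [Finset.sum_comm]

end InducedL1Norm

lemma sum_mul_one_sub_le {ι : Type*} [Fintype ι] {c x : ι → ℝ} {ε θ : ℝ}
    (hx : ∀ u, 0 ≤ x u) (hc : ∀ u, |c u - 1| ≤ ε) {i : ι} (hθ : |c i - ∑ u, c u * x u| ≤ θ) :
    (∑ u, x u) * (1 - ε) ≤ 1 + ε + θ :=
  calc (∑ u, x u) * (1 - ε) = ∑ u, (1 - ε) * x u := by rw [Finset.sum_mul]; simp only [mul_comm]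
    _ ≤ ∑ u, c u * x u :=
        Finset.sum_le_sum fun u _ =>
          mul_le_mul_of_nonneg_right (by linarith [(abs_le.1 (hc u)).1]) (hx u)
    _ ≤ 1 + ε + θ := by linarith [(abs_le.1 (hc i)).2, (abs_le.1 hθ).1]

section SeparableFactor

variable {κ μ : Type*} [DecidableEq κ] {Hbar : Matrix κ μ ℝ} {σ : Equiv.Perm (κ ⊕ μ)}

variable (Hbar σ) in
/-- `[I H̄]` with its columns permuted by `σ`: the right factor of an `r`-separable matrix. -/
def separableFactor : Matrix κ (κ ⊕ μ) ℝ :=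
  (fromCols 1 Hbar).submatrix id σ

variable (Hbar σ) in
def separableWitness : Matrix (κ ⊕ μ) (κ ⊕ μ) ℝ :=
  (fromRows (separableFactor Hbar σ) 0).submatrix σ id

lemma separableFactor_nonneg (hHbar : ∀ k j, 0 ≤ Hbar k j) (k : κ) (u : κ ⊕ μ) :
    0 ≤ separableFactor Hbar σ k u := by
  unfold separableFactor
  rcases h : σ u with k' | j
  · simp only [submatrix_apply, id, h, fromCols_apply_inl, one_apply]
    split_ifs <;> norm_num
  · simpa only [submatrix_apply, id, h, fromCols_apply_inr] using hHbar k j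

lemma separableFactor_apply_symm_inl (k k' : κ) :
    separableFactor Hbar σ k (σ.symm (Sum.inl k')) = (1 : Matrix κ κ ℝ) k k' := by
  simp [separableFactor]

lemma separableFactor_mul_separableWitness [Fintype κ] [Fintype μ] :
    separableFactor Hbar σ * separableWitness Hbar σ = separableFactor Hbar σ := by
  rw [separableWitness, separableFactor, submatrix_mul_equiv, fromCols_mul_fromRows]
  simp

lemma separableWitness_apply (u v : κ ⊕ μ) :
    separableWitness Hbar σ u v = Sum.elim (separableFactor Hbar σ · v) 0 (σ u) := by
  rcases h : σ u <;> simp [separableWitness, h]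

lemma separableWitness_nonneg (hHbar : ∀ k j, 0 ≤ Hbar k j) (u v : κ ⊕ μ) :
    0 ≤ separableWitness Hbar σ u v := by
  rw [separableWitness_apply]
  rcases σ u with k | j
  exacts [separableFactor_nonneg hHbar k v, le_rfl]

lemma sum_separableWitness_apply [Fintype κ] [Fintype μ] (v : κ ⊕ μ) :
    ∑ u, separableWitness Hbar σ u v = ∑ k, separableFactor Hbar σ k v := by
  rw [← σ.symm.sum_comp, Fintype.sum_sum_type]
  simp [separableWitness_apply]

lemma trace_separableWitness [Fintype κ] [Fintype μ] :
    trace (separableWitness Hbar σ) = Fintype.card κ := by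
  rw [trace, ← σ.symm.sum_comp, Fintype.sum_sum_type]
  simp [separableWitness_apply, separableFactor_apply_symm_inl]

lemma separableWitness_feas [Fintype κ] [Fintype μ] [DecidableEq μ]
    (hHbar : ∀ k j, 0 ≤ Hbar k j) (hsum : ∀ u, ∑ k, separableFactor Hbar σ k u = 1) :
    Feas (separableWitness Hbar σ) (Fintype.card κ) := by
  have hle_one (k : κ) (u : κ ⊕ μ) : separableFactor Hbar σ k u ≤ 1 :=
    hsum u ▸ Finset.single_le_sum (fun k' _ => separableFactor_nonneg hHbar k' u)
      (Finset.mem_univ k)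
  have hle_diag (u v : κ ⊕ μ) : separableWitness Hbar σ u v ≤ separableWitness Hbar σ u u := by
    simp only [separableWitness_apply]
    rcases h : σ u with k | j
    · have hu : u = σ.symm (Sum.inl k) := σ.eq_symm_apply.2 h
      simpa [hu, separableFactor_apply_symm_inl] using hle_one k v
    · exact le_rfl
  refine ⟨trace_separableWitness, fun u => ?_, separableWitness_nonneg hHbar, hle_diag⟩
  rw [separableWitness_apply]
  rcases σ u with k | j
  exacts [hle_one k u, zero_le_one]

end SeparableFactor

theorem opt_column_norm_bound_general
    {d r m : ℕ} (W : Matrix (Fin d) (Fin r) ℝ) (Hbar : Matrix (Fin r) (Fin m) ℝ)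
    (σ : Equiv.Perm (Fin r ⊕ Fin m))
    (N A V : Matrix (Fin d) (Fin r ⊕ Fin m) ℝ)
    (H : Matrix (Fin r) (Fin r ⊕ Fin m) ℝ) (ε : ℝ)
    (hW : ∀ i j, 0 ≤ W i j) (hHbar : ∀ i j, 0 ≤ Hbar i j)
    (hH : H = fun j u => Matrix.fromCols (1 : Matrix (Fin r) (Fin r) ℝ) Hbar j (σ u))
    (hV : V = W * H) (hA : A = V + N)
    (hVcol : ∀ u, l1 (fun i => V i u) = 1)
    (hHcol : ∀ u, l1 (fun j => H j u) = 1)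
    (hε1 : ε < 1) (hN : ml1 N ≤ ε)
    (Xopt : Matrix (Fin r ⊕ Fin m) (Fin r ⊕ Fin m) ℝ)
    (hfeas : Feas Xopt r)
    (hopt : ∀ X : Matrix (Fin r ⊕ Fin m) (Fin r ⊕ Fin m) ℝ,
      Feas X r → ml1 (A - A * Xopt) ≤ ml1 (A - A * X)) :
    ∀ i, l1 (fun u => Xopt u i) ≤ 1 + 4 * ε / (1 - ε) := by
  obtain rfl : H = separableFactor Hbar σ := hH
  subst hV
  have hHnn := separableFactor_nonneg (σ := σ) hHbar
  have hHsum (u) : ∑ k, separableFactor Hbar σ k u = 1 := by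
    rw [← hHcol u, l1_eq_sum_of_nonneg (hHnn · u)]
  have hVnn (i u) : 0 ≤ (W * separableFactor Hbar σ) i u :=
    mul_apply (M := W) ▸ Finset.sum_nonneg fun k _ => mul_nonneg (hW i k) (hHnn k u)
  have hVsum (u) : ∑ i, (W * separableFactor Hbar σ) i u = 1 := by
    rw [← hVcol u, l1_eq_sum_of_nonneg (hVnn · u)]
  have hθ : ml1 (A - A * Xopt) ≤ 2 * ε := by
    refine (hopt _ (by simpa using separableWitness_feas hHbar hHsum)).trans ?_
    rw [hA, Matrix.add_mul, Matrix.mul_assoc, separableFactor_mul_separableWitness,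
      add_sub_add_left_eq_sub]
    have hX := ml1_le_one_of_sum_eq_one (separableWitness_nonneg (σ := σ) hHbar)
      fun v => (sum_separableWitness_apply v).trans (hHsum v)
    linarith [ml1_sub_mul_le (M := N) hX]
  have hcol (u) : |∑ i, A i u - 1| ≤ ε := by
    simp only [hA, Matrix.add_apply, Finset.sum_add_distrib, hVsum, add_sub_cancel_left]
    exact (abs_sum_le_ml1 N u).trans hN
  intro i
  have hs := sum_mul_one_sub_le (hfeas.2.2.1 · i) hcol <|
    sum_sub_mul_apply A Xopt i ▸ (abs_sum_le_ml1 _ i).trans hθ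
  have hε : 0 < 1 - ε := by linarith
  rw [l1_eq_sum_of_nonneg (hfeas.2.2.1 · i), show 1 + 4 * ε / (1 - ε) = (1 + 3 * ε) / (1 - ε) by
    field_simp; ring, le_div_iff₀ hε]
  linarith

/-- Every column of an optimal solution of P(A,r) has L1 norm at most 1 + 4ε/(1−ε). -/
theorem opt_column_norm_bound
    {d r m : ℕ} (W : Matrix (Fin d) (Fin r) ℝ) (Hbar : Matrix (Fin r) (Fin m) ℝ)
    (σ : Equiv.Perm (Fin r ⊕ Fin m))
    (N A V : Matrix (Fin d) (Fin r ⊕ Fin m) ℝ)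
    (H : Matrix (Fin r) (Fin r ⊕ Fin m) ℝ) (ε : ℝ)
    (hW : ∀ i j, 0 ≤ W i j) (hHbar : ∀ i j, 0 ≤ Hbar i j)
    (hH : H = fun j u => Matrix.fromCols (1 : Matrix (Fin r) (Fin r) ℝ) Hbar j (σ u))
    (hV : V = W * H) (hA : A = V + N)
    (hVcol : ∀ u, l1 (fun i => V i u) = 1)
    (hWcol : ∀ j, l1 (fun i => W i j) = 1)
    (hHcol : ∀ u, l1 (fun j => H j u) = 1)
    (hε0 : 0 ≤ ε) (hε1 : ε < 1) (hN : ml1 N ≤ ε)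
    (Xopt : Matrix (Fin r ⊕ Fin m) (Fin r ⊕ Fin m) ℝ)
    (hfeas : Feas Xopt r)
    (hopt : ∀ X : Matrix (Fin r ⊕ Fin m) (Fin r ⊕ Fin m) ℝ,
      Feas X r → ml1 (A - A * Xopt) ≤ ml1 (A - A * X)) :
    ∀ i, l1 (fun u => Xopt u i) ≤ 1 + 4 * ε / (1 - ε) :=
  opt_column_norm_bound_general W Hbar σ N A V H ε hW hHbar hH hV hA hVcol hHcol hε1 hN Xopt hfeas
    hopt
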